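/- arXiv:1310.7826 — 2 statements merged into one kernel-verified Lean document; each statement's English description precedes it below -/
import Mathlib

section
/- For any invertible real n×n matrix F and any orthogonal matrix Q, ‖F − Q‖_F ≥ ‖√(FᵀF) − I‖_F, where ‖·‖_F is the Frobenius norm, with equality if and only if Q is the orthogonal polar factor of F. -/
open Matrix

noncomputable def frob {n : ℕ} (A : Matrix (Fin n) (Fin n) ℝ) : ℝ :=
  Real.sqrt ((Aᵀ * A).trace)

/-! With `R = F U⁻¹` orthogonal and `F = R U`, expanding the squared norms gives
`‖F - Q‖² - ‖U - 1‖² = 2 (tr U - tr (Z U))` for the orthogonal matrix `Z = Qᵀ R`. Since `U` is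
symmetric, `2 (tr U - tr (Z U)) = tr ((1 - Z) U (1 - Z)ᵀ)`, which is nonnegative and, as `U` is
positive definite, vanishes only when `Z = 1`, i.e. `Q = R`. -/

open scoped ComplexOrder

namespace Matrix

theorem PosDef.trace_mul_mul_conjTranspose_eq_zero_iff {𝕜 ι m : Type*} [RCLike 𝕜]
    [Fintype ι] [Fintype m] {M : Matrix ι ι 𝕜} (hM : M.PosDef) (A : Matrix m ι 𝕜) :
    (A * M * Aᴴ).trace = 0 ↔ A = 0 := by
  refine ⟨fun h ↦ ?_, fun h ↦ by simp [h]⟩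
  have hdiag : ∀ i, (A * M * Aᴴ) i i = star (star (A i)) ⬝ᵥ (M *ᵥ star (A i)) := by
    intro i
    rw [star_star, dotProduct_mulVec]
    rfl
  have hzero := (hM.posSemidef.mul_mul_conjTranspose_same A).trace_eq_zero_iff.mp h
  ext i j
  by_contra hij
  have hrow : star (A i) ≠ 0 := fun h ↦ hij (by simpa using congrFun h j)
  have := hM.dotProduct_mulVec_pos hrow
  rw [← hdiag, hzero] at this
  exact this.false

theorem trace_transpose_mul_self_nonneg {m ι : Type*} [Fintype m] [Fintype ι]
    (A : Matrix m ι ℝ) : 0 ≤ (Aᵀ * A).trace :=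
  (posSemidef_conjTranspose_mul_self A).trace_nonneg

variable {ι : Type*} [Fintype ι] [DecidableEq ι]

theorem trace_sub_transpose_mul_sub {A Q : Matrix ι ι ℝ} (hQ : Qᵀ * Q = 1) :
    ((A - Q)ᵀ * (A - Q)).trace = (Aᵀ * A).trace - 2 * (Qᵀ * A).trace + Fintype.card ι := by
  have hcross : (Aᵀ * Q).trace = (Qᵀ * A).trace := by
    rw [← trace_transpose, transpose_mul, transpose_transpose]
  rw [transpose_sub, sub_mul, mul_sub, mul_sub, hQ, trace_sub, trace_sub, trace_sub, trace_one,
    hcross]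
  ring

theorem trace_one_sub_mul_mul_transpose_one_sub {Z U : Matrix ι ι ℝ} (hZ : Zᵀ * Z = 1)
    (hU : Uᵀ = U) : ((1 - Z) * U * (1 - Z)ᵀ).trace = 2 * (U.trace - (Z * U).trace) := by
  have hcross : (U * Zᵀ).trace = (Z * U).trace := by
    rw [← trace_transpose, transpose_mul, transpose_transpose, hU]
  have hconj : (Z * U * Zᵀ).trace = U.trace := by
    rw [trace_mul_cycle, hZ, one_mul]
  simp only [transpose_sub, transpose_one, sub_mul, mul_sub, one_mul, mul_one, trace_sub, hcross,
    hconj]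
  ring

theorem trace_orthogonal_mul_le {Z U : Matrix ι ι ℝ} (hZ : Zᵀ * Z = 1) (hU : U.PosDef) :
    (Z * U).trace ≤ U.trace := by
  have hnonneg := (hU.posSemidef.mul_mul_conjTranspose_same (1 - Z)).trace_nonneg
  rw [conjTranspose_eq_transpose_of_trivial,
    trace_one_sub_mul_mul_transpose_one_sub hZ (by simpa using hU.isHermitian.eq)] at hnonneg
  linarith

theorem trace_orthogonal_mul_eq_iff {Z U : Matrix ι ι ℝ} (hZ : Zᵀ * Z = 1) (hU : U.PosDef) :
    (Z * U).trace = U.trace ↔ Z = 1 := by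
  have hdef := hU.trace_mul_mul_conjTranspose_eq_zero_iff (1 - Z)
  rw [conjTranspose_eq_transpose_of_trivial,
    trace_one_sub_mul_mul_transpose_one_sub hZ (by simpa using hU.isHermitian.eq)] at hdef
  rw [@eq_comm _ Z, ← sub_eq_zero (a := (1 : Matrix ι ι ℝ)), ← hdef]
  constructor <;> intro h <;> linarith

theorem transpose_mul_eq_one_iff {Q R : Matrix ι ι ℝ} (hQ : Qᵀ * Q = 1) :
    Qᵀ * R = 1 ↔ Q = R := by
  refine ⟨fun h ↦ ?_, fun h ↦ h ▸ hQ⟩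
  calc Q = Q * (Qᵀ * R) := by rw [h, mul_one]
    _ = R := by rw [← mul_assoc, mul_eq_one_comm.mp hQ, one_mul]

theorem mul_inv_orthogonal_of_mul_self_eq {F U : Matrix ι ι ℝ} (hU : Uᵀ = U)
    (hUdet : IsUnit U.det) (hU2 : U * U = Fᵀ * F) : (F * U⁻¹)ᵀ * (F * U⁻¹) = 1 := by
  calc (F * U⁻¹)ᵀ * (F * U⁻¹) = U⁻¹ * (U * U) * U⁻¹ := by
        rw [transpose_mul, transpose_nonsing_inv, hU, hU2, mul_assoc, mul_assoc, mul_assoc]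
    _ = 1 := by rw [← mul_assoc, nonsing_inv_mul _ hUdet, one_mul, mul_nonsing_inv _ hUdet]

end Matrix

theorem polar_factor_best_approx_general (n : ℕ)
    (F Q U : Matrix (Fin n) (Fin n) ℝ)
    (hQ : Qᵀ * Q = 1) (hU : U.PosDef) (hU2 : U * U = Fᵀ * F) :
    frob (F - Q) ≥ frob (U - 1) ∧
      (frob (F - Q) = frob (U - 1) ↔ Q = F * U⁻¹) := by
  have hUt : Uᵀ = U := by simpa using hU.isHermitian.eq
  have hUdet : IsUnit U.det := (isUnit_iff_isUnit_det U).mp hU.isUnit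
  set R := F * U⁻¹
  have hQF : Qᵀ * F = Qᵀ * R * U := by rw [mul_assoc, nonsing_inv_mul_cancel_right U F hUdet]
  have hR : Rᵀ * R = 1 := mul_inv_orthogonal_of_mul_self_eq hUt hUdet hU2
  have hZ : (Qᵀ * R)ᵀ * (Qᵀ * R) = 1 := by
    rw [transpose_mul, transpose_transpose, mul_assoc, ← mul_assoc Q, mul_eq_one_comm.mp hQ,
      one_mul, hR]
  have hgap : ((F - Q)ᵀ * (F - Q)).trace
      = ((U - 1)ᵀ * (U - 1)).trace + 2 * (U.trace - (Qᵀ * R * U).trace) := by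
    rw [trace_sub_transpose_mul_sub hQ, trace_sub_transpose_mul_sub (by simp), transpose_one,
      one_mul, hUt, hU2, hQF]
    ring
  have hle := trace_orthogonal_mul_le hZ hU
  refine ⟨Real.sqrt_le_sqrt (by linarith), ?_⟩
  rw [frob, frob, Real.sqrt_inj (trace_transpose_mul_self_nonneg _)
    (trace_transpose_mul_self_nonneg _), hgap]
  simp only [add_eq_left, mul_eq_zero, two_ne_zero, false_or, sub_eq_zero]
  rw [eq_comm, trace_orthogonal_mul_eq_iff hZ hU, transpose_mul_eq_one_iff hQ]

theorem polar_factor_best_approx (n : ℕ)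
    (F Q U : Matrix (Fin n) (Fin n) ℝ) (hF : IsUnit F.det)
    (hQ : Qᵀ * Q = 1) (hU : U.PosDef) (hU2 : U * U = Fᵀ * F) :
    frob (F - Q) ≥ frob (U - 1) ∧
      (frob (F - Q) = frob (U - 1) ↔ Q = F * U⁻¹) :=
  polar_factor_best_approx_general n F Q U hQ hU hU2
end

section
/- Grioli's theorem: Let F ∈ GL(3,ℝ) with polar decomposition F = R·D (R orthogonal, D symmetric positive definite with eigenvalues 1+Δ₁, 1+Δ₂, 1+Δ₃). Then for any point p ∈ ℝ³, translation t' ∈ ℝ³ and rotation R' ∈ SO(3), ∫_{B_ρ(0)} |p + F·h − (R'·h + t')|² dh ≥ (4πρ⁵/15)·(Δ₁² + Δ₂² + Δ₃²), with equality if and only if t' = p and R' = R. -/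
open Matrix MeasureTheory

noncomputable def mv (Z : Matrix (Fin 3) (Fin 3) ℝ) (h : EuclideanSpace ℝ (Fin 3)) :
    EuclideanSpace ℝ (Fin 3) :=
  (EuclideanSpace.equiv (Fin 3) ℝ).symm (Z.mulVec (EuclideanSpace.equiv (Fin 3) ℝ h))

open Metric Set Module WithLp

/-!
Expanding the square, the integral is `vol(B_ρ) ‖p - t'‖² + (4πρ⁵/15) ‖F - R'‖²_F`: the cross
term is odd in `h`, and the reflections and coordinate permutations of the ball force
`∫ hⱼ hₖ = δⱼₖ ∫ ‖h‖² / 3`. With `Q = Rᵀ R'` one has `‖F - R'‖²_F = ‖D - Q‖²_F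
= ‖D - 1‖²_F + tr((1 - Q) D (1 - Q)ᵀ)`; the first term is `Σ Δᵢ²` by the spectral theorem, and
the second is positive unless `Q = 1` because `D` is positive definite.
-/

theorem Continuous.integrableOn_ball {X G : Type*} [MetricSpace X] [ProperSpace X]
    [MeasurableSpace X] [OpensMeasurableSpace X] {μ : Measure X} [IsFiniteMeasureOnCompacts μ]
    [NormedAddCommGroup G] {f : X → G} (hf : Continuous f) (x : X) (ρ : ℝ) :
    IntegrableOn f (ball x ρ) μ :=
  (hf.continuousOn.integrableOn_compact (isCompact_closedBall x ρ)).mono_set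
    ball_subset_closedBall

section Ball

variable {E : Type*} [NormedAddCommGroup E] [InnerProductSpace ℝ E] [FiniteDimensional ℝ E]
  [MeasurableSpace E] [BorelSpace E]

theorem setIntegral_ball_comp_linearIsometryEquiv {G : Type*} [NormedAddCommGroup G]
    [NormedSpace ℝ G] (e : E ≃ₗᵢ[ℝ] E) (f : E → G) (ρ : ℝ) :
    ∫ x in ball 0 ρ, f (e x) = ∫ x in ball 0 ρ, f x := by
  have hball : e ⁻¹' ball 0 ρ = ball 0 ρ := by ext; simp
  simpa [hball] using e.measurePreserving.setIntegral_preimage_emb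
    e.toHomeomorph.measurableEmbedding f (ball 0 ρ)

theorem setIntegral_ball_eq_zero_of_comp_eq_neg (e : E ≃ₗᵢ[ℝ] E) {f : E → ℝ}
    (hf : ∀ x, f (e x) = -f x) (ρ : ℝ) : ∫ x in ball 0 ρ, f x = 0 := by
  have := setIntegral_ball_comp_linearIsometryEquiv e f ρ
  simp only [hf, integral_neg] at this
  linarith

theorem integral_ball_norm_sq [Nontrivial E] {ρ : ℝ} (hρ : 0 ≤ ρ) :
    ∫ x in ball (0 : E) ρ, ‖x‖ ^ 2
      = finrank ℝ E * volume.real (ball (0 : E) 1) * ρ ^ (finrank ℝ E + 2)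
        / (finrank ℝ E + 2) := by
  have hind : (ball (0 : E) ρ).indicator (fun x => ‖x‖ ^ 2)
      = fun x => (Iio ρ).indicator (fun r : ℝ => r ^ 2) ‖x‖ := by
    ext x; by_cases hx : ‖x‖ < ρ <;> simp [hx]
  have hradial : ∫ r in Ioi (0 : ℝ), r ^ (finrank ℝ E - 1) • (Iio ρ).indicator (fun r => r ^ 2) r
      = ρ ^ (finrank ℝ E + 2) / (finrank ℝ E + 2) := by
    have hpow : ∀ r : ℝ, r ^ (finrank ℝ E - 1) • (Iio ρ).indicator (fun r => r ^ 2) r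
        = (Iio ρ).indicator (fun r => r ^ (finrank ℝ E + 1)) r := fun r => by
      have hexp : finrank ℝ E - 1 + 2 = finrank ℝ E + 1 := by
        have := finrank_pos (R := ℝ) (M := E); omega
      by_cases hr : r < ρ <;> simp [hr, ← pow_add, hexp]
    simp_rw [hpow]
    rw [setIntegral_indicator measurableSet_Iio, Ioi_inter_Iio, ← integral_Ioc_eq_integral_Ioo,
      ← intervalIntegral.integral_of_le hρ, integral_pow]
    push_cast; ring
  rw [← integral_indicator measurableSet_ball, hind, integral_fun_norm_addHaar, hradial,
    nsmul_eq_mul, smul_eq_mul]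
  ring

theorem integral_ball_norm_add_sq {F : Type*} [NormedAddCommGroup F] [InnerProductSpace ℝ F]
    (c : F) (A : E →ₗ[ℝ] F) (ρ : ℝ) :
    ∫ x in ball (0 : E) ρ, ‖c + A x‖ ^ 2
      = volume.real (ball (0 : E) ρ) * ‖c‖ ^ 2 + ∫ x in ball (0 : E) ρ, ‖A x‖ ^ 2 := by
  have hA : Continuous A := A.continuous_of_finiteDimensional
  have hcross : ∫ x in ball (0 : E) ρ, 2 * inner ℝ c (A x) = 0 :=
    setIntegral_ball_eq_zero_of_comp_eq_neg (LinearIsometryEquiv.neg ℝ) (by simp) ρ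
  have hint₁ : IntegrableOn (fun x => 2 * inner ℝ c (A x)) (ball (0 : E) ρ) :=
    (continuous_const.mul (continuous_const.inner hA)).integrableOn_ball 0 ρ
  have hint₂ : IntegrableOn (fun x => ‖A x‖ ^ 2) (ball (0 : E) ρ) :=
    (hA.norm.pow 2).integrableOn_ball 0 ρ
  have hint₀ : IntegrableOn (fun _ => ‖c‖ ^ 2) (ball (0 : E) ρ) :=
    integrableOn_const measure_ball_lt_top.ne
  simp_rw [norm_add_sq_real, add_assoc]
  rw [integral_add hint₀ (by exact hint₁.add hint₂), integral_add hint₁ hint₂, hcross,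
    setIntegral_const, smul_eq_mul, zero_add]

end Ball

section EuclideanSpace

variable {ι : Type*} [Fintype ι] [DecidableEq ι]

theorem integral_ball_coord_mul_coord_of_ne {j k : ι} (hjk : j ≠ k) (ρ : ℝ) :
    ∫ x in ball (0 : EuclideanSpace ℝ ι) ρ, x j * x k = 0 := by
  let e : EuclideanSpace ℝ ι ≃ₗᵢ[ℝ] EuclideanSpace ℝ ι := LinearIsometryEquiv.piLpCongrRight 2
    fun i => if i = j then LinearIsometryEquiv.neg ℝ else LinearIsometryEquiv.refl ℝ ℝ
  refine setIntegral_ball_eq_zero_of_comp_eq_neg e (fun x => ?_) ρ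
  simp [e, hjk.symm]

theorem integral_ball_coord_sq_eq (j k : ι) (ρ : ℝ) :
    ∫ x in ball (0 : EuclideanSpace ℝ ι) ρ, x j ^ 2
      = ∫ x in ball (0 : EuclideanSpace ℝ ι) ρ, x k ^ 2 := by
  have := setIntegral_ball_comp_linearIsometryEquiv
    (LinearIsometryEquiv.piLpCongrLeft 2 ℝ ℝ (Equiv.swap j k)) (fun x => x k ^ 2) ρ
  simpa [Equiv.piCongrLeft'] using this

theorem integral_ball_coord_sq (j : ι) (ρ : ℝ) :
    ∫ x in ball (0 : EuclideanSpace ℝ ι) ρ, x j ^ 2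
      = (∫ x in ball (0 : EuclideanSpace ℝ ι) ρ, ‖x‖ ^ 2) / Fintype.card ι := by
  have hsum : ∫ x in ball (0 : EuclideanSpace ℝ ι) ρ, ‖x‖ ^ 2
      = ∑ k : ι, ∫ x in ball (0 : EuclideanSpace ℝ ι) ρ, x k ^ 2 := by
    simp_rw [EuclideanSpace.norm_sq_eq, Real.norm_eq_abs, sq_abs]
    exact integral_finsetSum _ fun k _ =>
      ((EuclideanSpace.proj k).continuous.pow 2).integrableOn_ball 0 ρ
  simp_rw [hsum, integral_ball_coord_sq_eq _ j, Finset.sum_const, Finset.card_univ, nsmul_eq_mul]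
  have : Nonempty ι := ⟨j⟩
  have : (Fintype.card ι : ℝ) ≠ 0 := Nat.cast_ne_zero.mpr Fintype.card_ne_zero
  field_simp

theorem integral_ball_coord_mul_coord (j k : ι) (ρ : ℝ) :
    ∫ x in ball (0 : EuclideanSpace ℝ ι) ρ, x j * x k
      = (∫ x in ball (0 : EuclideanSpace ℝ ι) ρ, ‖x‖ ^ 2) / Fintype.card ι
        * (1 : Matrix ι ι ℝ) j k := by
  rcases eq_or_ne j k with rfl | hjk
  · simp [← sq, integral_ball_coord_sq]
  · simp [integral_ball_coord_mul_coord_of_ne hjk, hjk]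

theorem integral_ball_dotProduct_mulVec (B : Matrix ι ι ℝ) (ρ : ℝ) :
    ∫ x in ball (0 : EuclideanSpace ℝ ι) ρ, ofLp x ⬝ᵥ B *ᵥ ofLp x
      = (∫ x in ball (0 : EuclideanSpace ℝ ι) ρ, ‖x‖ ^ 2) / Fintype.card ι * B.trace := by
  have hexpand : ∀ x : EuclideanSpace ℝ ι,
      ofLp x ⬝ᵥ B *ᵥ ofLp x = ∑ j, ∑ k, B j k * (x j * x k) := fun x => by
    simp only [dotProduct, mulVec, Finset.mul_sum]
    exact Finset.sum_congr rfl fun j _ => Finset.sum_congr rfl fun k _ => by ring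
  have hint : ∀ j k, Integrable (fun x : EuclideanSpace ℝ ι => B j k * (x j * x k))
      (volume.restrict (ball 0 ρ)) := fun j k =>
    (continuous_const.mul ((EuclideanSpace.proj j).continuous.mul
      (EuclideanSpace.proj k).continuous)).integrableOn_ball 0 ρ
  simp_rw [hexpand]
  rw [integral_finsetSum _ fun j _ => integrable_finsetSum _ fun k _ => hint j k]
  simp_rw [integral_finsetSum _ fun k _ => hint _ k, integral_const_mul,
    integral_ball_coord_mul_coord, one_apply, mul_ite, mul_one, mul_zero, Finset.sum_ite_eq,
    Finset.mem_univ, if_true, trace, diag, Finset.mul_sum]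
  exact Finset.sum_congr rfl fun j _ => mul_comm _ _

theorem EuclideanSpace.norm_sq_toEuclideanLin {ι' : Type*} [Fintype ι'] (M : Matrix ι' ι ℝ)
    (x : EuclideanSpace ℝ ι) : ‖toEuclideanLin M x‖ ^ 2 = ofLp x ⬝ᵥ (Mᵀ * M) *ᵥ ofLp x := by
  rw [← real_inner_self_eq_norm_sq, EuclideanSpace.inner_eq_star_dotProduct]
  simp [← mulVec_mulVec, dotProduct_mulVec, vecMul_transpose, toLpLin_apply]

theorem integral_ball_norm_add_toEuclideanLin_sq {ι' : Type*} [Fintype ι']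
    (c : EuclideanSpace ℝ ι') (M : Matrix ι' ι ℝ) (ρ : ℝ) :
    ∫ x in ball (0 : EuclideanSpace ℝ ι) ρ, ‖c + toEuclideanLin M x‖ ^ 2
      = volume.real (ball (0 : EuclideanSpace ℝ ι) ρ) * ‖c‖ ^ 2
        + (∫ x in ball (0 : EuclideanSpace ℝ ι) ρ, ‖x‖ ^ 2) / Fintype.card ι
          * (Mᵀ * M).trace := by
  simp_rw [integral_ball_norm_add_sq, EuclideanSpace.norm_sq_toEuclideanLin,
    integral_ball_dotProduct_mulVec]

end EuclideanSpace

theorem integral_ball_norm_sq_fin_three {ρ : ℝ} (hρ : 0 ≤ ρ) :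
    ∫ x in ball (0 : EuclideanSpace ℝ (Fin 3)) ρ, ‖x‖ ^ 2 = 4 * Real.pi * ρ ^ 5 / 5 := by
  rw [integral_ball_norm_sq hρ, finrank_euclideanSpace_fin, measureReal_def,
    EuclideanSpace.volume_ball_fin_three, ENNReal.toReal_mul, ENNReal.toReal_pow,
    ENNReal.toReal_ofReal zero_le_one, ENNReal.toReal_ofReal (by positivity)]
  push_cast
  ring

namespace Matrix

variable {m n α : Type*} [Fintype m] [Fintype n] [CommRing α]

theorem trace_mul_mul_transpose (X : Matrix m n α) (D : Matrix n n α) :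
    (X * D * Xᵀ).trace = ∑ i, X i ⬝ᵥ D *ᵥ X i := by
  simp only [trace, diag, mul_apply, transpose_apply, dotProduct, mulVec, Finset.sum_mul,
    Finset.mul_sum]
  exact Finset.sum_congr rfl fun i _ => Finset.sum_comm.trans
    (Finset.sum_congr rfl fun j _ => Finset.sum_congr rfl fun k _ => by ring)

theorem PosDef.trace_mul_mul_transpose_nonneg {D : Matrix n n ℝ} (hD : D.PosDef)
    (X : Matrix m n ℝ) : 0 ≤ (X * D * Xᵀ).trace := by
  rw [trace_mul_mul_transpose]
  exact Finset.sum_nonneg fun i _ => by simpa using hD.posSemidef.dotProduct_mulVec_nonneg (X i)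

theorem PosDef.trace_mul_mul_transpose_eq_zero_iff {D : Matrix n n ℝ} (hD : D.PosDef)
    {X : Matrix m n ℝ} : (X * D * Xᵀ).trace = 0 ↔ X = 0 := by
  refine ⟨fun h => ?_, fun h => by simp [h]⟩
  by_contra hX
  obtain ⟨i, hi⟩ : ∃ i, X i ≠ 0 := by
    by_contra! h
    exact hX (funext h)
  refine h.not_gt ?_
  rw [trace_mul_mul_transpose]
  exact Finset.sum_pos' (fun i _ => by simpa using hD.posSemidef.dotProduct_mulVec_nonneg (X i))
    ⟨i, Finset.mem_univ i, by simpa using hD.dotProduct_mulVec_pos hi⟩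

variable [DecidableEq n]

theorem trace_transpose_mul_self_sub_orthogonal {D Q : Matrix n n α} (hD : Dᵀ = D)
    (hQ : Qᵀ * Q = 1) :
    ((D - Q)ᵀ * (D - Q)).trace
      = ((D - 1)ᵀ * (D - 1)).trace + ((1 - Q) * D * (1 - Q)ᵀ).trace := by
  have hQD : (Qᵀ * D).trace = (Q * D).trace := by
    rw [← trace_transpose, transpose_mul, transpose_transpose, hD, trace_mul_comm]
  have hQDQ : (Q * D * Qᵀ).trace = D.trace := by
    rw [trace_mul_cycle, hQ, Matrix.one_mul]
  simp only [transpose_sub, transpose_one, sub_mul, mul_sub, Matrix.one_mul, Matrix.mul_one,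
    trace_sub, hD, hQ, hQDQ, hQD]
  rw [trace_mul_comm D Q, trace_mul_comm D Qᵀ, hQD]
  ring

theorem IsHermitian.trace_transpose_mul_self_sub_one {D : Matrix n n ℝ} (hD : D.IsHermitian) :
    ((D - 1)ᵀ * (D - 1)).trace = ∑ i, (hD.eigenvalues i - 1) ^ 2 := by
  set φ := Unitary.conjStarAlgAut ℝ _ hD.eigenvectorUnitary
  have hsub : D - 1 = φ (diagonal fun i => hD.eigenvalues i - 1) := by
    conv_lhs => rw [hD.spectral_theorem]
    rw [← map_one φ, ← map_sub, ← diagonal_one, diagonal_sub]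
    rfl
  have htrace : ∀ X, (φ X).trace = X.trace := fun X => by
    simp [φ, trace_mul_cycle]
  rw [← conjTranspose_eq_transpose_of_trivial, hsub, ← star_eq_conjTranspose, ← map_star,
    ← map_mul, htrace, star_eq_conjTranspose, diagonal_conjTranspose, diagonal_mul_diagonal,
    trace_diagonal]
  simp [sq]

variable {R R' D : Matrix n n ℝ}

theorem trace_mul_sub_orthogonal (hR : Rᵀ * R = 1) (hR' : R'ᵀ * R' = 1) (hD : D.IsHermitian) :
    ((R * D - R')ᵀ * (R * D - R')).trace
      = ∑ i, (hD.eigenvalues i - 1) ^ 2 + ((1 - Rᵀ * R') * D * (1 - Rᵀ * R')ᵀ).trace := by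
  have hRRt : R * Rᵀ = 1 := mul_eq_one_comm.mp hR
  have hQ : (Rᵀ * R')ᵀ * (Rᵀ * R') = 1 := by
    rw [transpose_mul, transpose_transpose, Matrix.mul_assoc, ← Matrix.mul_assoc R, hRRt,
      Matrix.one_mul, hR']
  have hsub : R * D - R' = R * (D - Rᵀ * R') := by
    rw [Matrix.mul_sub, ← Matrix.mul_assoc, hRRt, Matrix.one_mul]
  have hDt : Dᵀ = D := by simpa using hD.eq
  rw [hsub, transpose_mul, Matrix.mul_assoc, ← Matrix.mul_assoc Rᵀ, hR, Matrix.one_mul,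
    trace_transpose_mul_self_sub_orthogonal hDt hQ, hD.trace_transpose_mul_self_sub_one]

theorem PosDef.sum_sq_eigenvalues_sub_one_le (hR : Rᵀ * R = 1) (hR' : R'ᵀ * R' = 1)
    (hD : D.PosDef) :
    ∑ i, (hD.1.eigenvalues i - 1) ^ 2 ≤ ((R * D - R')ᵀ * (R * D - R')).trace := by
  rw [trace_mul_sub_orthogonal hR hR' hD.1]
  exact le_add_of_nonneg_right (hD.trace_mul_mul_transpose_nonneg _)

theorem PosDef.trace_mul_sub_orthogonal_eq_iff (hR : Rᵀ * R = 1) (hR' : R'ᵀ * R' = 1)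
    (hD : D.PosDef) :
    ((R * D - R')ᵀ * (R * D - R')).trace = ∑ i, (hD.1.eigenvalues i - 1) ^ 2 ↔ R' = R := by
  rw [trace_mul_sub_orthogonal hR hR' hD.1, add_eq_left, hD.trace_mul_mul_transpose_eq_zero_iff,
    sub_eq_zero, eq_comm]
  refine ⟨fun h => ?_, fun h => by rw [h, hR]⟩
  rw [← Matrix.one_mul R', ← mul_eq_one_comm.mp hR, Matrix.mul_assoc, h, Matrix.mul_one]

end Matrix

theorem grioli_general (F R D : Matrix (Fin 3) (Fin 3) ℝ)
    (hR : Rᵀ * R = 1) (hD : D.PosDef) (hFRD : F = R * D)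
    (Δ : Fin 3 → ℝ) (hΔ : ∀ i, hD.1.eigenvalues i = 1 + Δ i)
    (p t' : EuclideanSpace ℝ (Fin 3)) (R' : Matrix (Fin 3) (Fin 3) ℝ)
    (hR' : R'ᵀ * R' = 1) (ρ : ℝ) (hρ : 0 < ρ) :
    (∫ h in Metric.ball (0 : EuclideanSpace ℝ (Fin 3)) ρ,
        ‖p + mv F h - (mv R' h + t')‖ ^ 2)
      ≥ (4 * Real.pi * ρ ^ 5 / 15) * (Δ 0 ^ 2 + Δ 1 ^ 2 + Δ 2 ^ 2) ∧
    ((∫ h in Metric.ball (0 : EuclideanSpace ℝ (Fin 3)) ρ,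
        ‖p + mv F h - (mv R' h + t')‖ ^ 2)
      = (4 * Real.pi * ρ ^ 5 / 15) * (Δ 0 ^ 2 + Δ 1 ^ 2 + Δ 2 ^ 2) ↔
        t' = p ∧ R' = R) := by
  set V := volume.real (ball (0 : EuclideanSpace ℝ (Fin 3)) ρ)
  set S := ((R * D - R')ᵀ * (R * D - R')).trace
  have hshift : ∀ h, p + mv F h - (mv R' h + t') = (p - t') + toEuclideanLin (F - R') h :=
    fun h => by
      rw [map_sub, LinearMap.sub_apply]
      change p + mv F h - (mv R' h + t') = (p - t') + (mv F h - mv R' h)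
      abel
  have hI : (∫ h in ball (0 : EuclideanSpace ℝ (Fin 3)) ρ, ‖p + mv F h - (mv R' h + t')‖ ^ 2)
      = V * ‖p - t'‖ ^ 2 + 4 * Real.pi * ρ ^ 5 / 15 * S := by
    simp_rw [hshift, integral_ball_norm_add_toEuclideanLin_sq,
      integral_ball_norm_sq_fin_three hρ.le, Fintype.card_fin, hFRD]
    ring
  have hΔsq : Δ 0 ^ 2 + Δ 1 ^ 2 + Δ 2 ^ 2 = ∑ i, (hD.1.eigenvalues i - 1) ^ 2 := by
    simp [Fin.sum_univ_three, hΔ]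
  have hV : 0 < V := ENNReal.toReal_pos (measure_ball_pos volume 0 hρ).ne' measure_ball_lt_top.ne
  have hκ : 0 < 4 * Real.pi * ρ ^ 5 / 15 := by positivity
  have hle := hD.sum_sq_eigenvalues_sub_one_le hR hR'
  rw [hI, hΔsq]
  refine ⟨by nlinarith [sq_nonneg ‖p - t'‖], ?_⟩
  rw [← sub_eq_zero, add_sub_assoc, ← mul_sub,
    add_eq_zero_iff_of_nonneg (by positivity) (by nlinarith), mul_eq_zero, mul_eq_zero,
    or_iff_right hV.ne', or_iff_right hκ.ne', pow_eq_zero_iff two_ne_zero, norm_eq_zero,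
    sub_eq_zero, sub_eq_zero, hD.trace_mul_sub_orthogonal_eq_iff hR hR', eq_comm]

theorem grioli (F R D : Matrix (Fin 3) (Fin 3) ℝ) (hdet : 0 < F.det)
    (hR : Rᵀ * R = 1) (hRdet : R.det = 1) (hD : D.PosDef) (hFRD : F = R * D)
    (Δ : Fin 3 → ℝ) (hΔ : ∀ i, hD.1.eigenvalues i = 1 + Δ i)
    (p t' : EuclideanSpace ℝ (Fin 3)) (R' : Matrix (Fin 3) (Fin 3) ℝ)
    (hR' : R'ᵀ * R' = 1) (hR'det : R'.det = 1) (ρ : ℝ) (hρ : 0 < ρ) :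
    (∫ h in Metric.ball (0 : EuclideanSpace ℝ (Fin 3)) ρ,
        ‖p + mv F h - (mv R' h + t')‖ ^ 2)
      ≥ (4 * Real.pi * ρ ^ 5 / 15) * (Δ 0 ^ 2 + Δ 1 ^ 2 + Δ 2 ^ 2) ∧
    ((∫ h in Metric.ball (0 : EuclideanSpace ℝ (Fin 3)) ρ,
        ‖p + mv F h - (mv R' h + t')‖ ^ 2)
      = (4 * Real.pi * ρ ^ 5 / 15) * (Δ 0 ^ 2 + Δ 1 ^ 2 + Δ 2 ^ 2) ↔
        t' = p ∧ R' = R) :=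
  grioli_general F R D hR hD hFRD Δ hΔ p t' R' hR' ρ hρ
end
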